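/- arXiv:2503.09817 — 2 statements merged into one kernel-verified Lean document; each statement's English description precedes it below -/
import Mathlib

section
/- Fix t ∈ [0,1] and γ ∈ [0,1). Suppose p, q : S×A → P(S) are two measurable families of probability measures with finite first moments which are both fixed points of the probability-path Bellman operator (B_t^π p = p and B_t^π q = q), with sup_{s,a} W₁(p(·|s,a), q(·|s,a)) < ∞, and suppose that for every ε > 0 there exists a jointly measurable family Γ̃_ε(·|s,a) of couplings of p(·|s,a) and q(·|s,a) with ∫‖x−y‖ dΓ̃_ε(x,y|s,a) ≤ W₁(p(·|s,a), q(·|s,a)) + ε for all (s,a). Then p(·|s,a) = q(·|s,a) for every (s,a); i.e., the fixed point of B_t^π is unique among such families. -/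
open MeasureTheory
open scoped ENNReal NNReal

noncomputable section

/-- The state space `S = ℝ^d`. -/
abbrev St (d : ℕ) := EuclideanSpace ℝ (Fin d)

/-- `(P^π m)(·|s,a) := ∫ m(·|s',π(s')) P(ds'|s,a)`. -/
def Ppi {d : ℕ} {𝒜 : Type*} [MeasurableSpace 𝒜]
    (P : St d × 𝒜 → Measure (St d)) (π : St d → 𝒜)
    (m : St d × 𝒜 → Measure (St d)) : St d × 𝒜 → Measure (St d) :=
  fun sa => (P sa).bind fun s' => m (s', π s')

/-- `P_t(·|s,a) := ∫ p_{t|1}(·|x₁) P(dx₁|s,a)` for a conditional path kernel `p_{t|1}`. -/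
def Pt {d : ℕ} {𝒜 : Type*} [MeasurableSpace 𝒜]
    (P : St d × 𝒜 → Measure (St d)) (κ : St d → Measure (St d)) :
    St d × 𝒜 → Measure (St d) :=
  fun sa => (P sa).bind κ

/-- The probability-path Bellman operator
`(B_t^π m)(·|s,a) := (1−γ) P_t(·|s,a) + γ (P^π m)(·|s,a)`. -/
def Bpath {d : ℕ} {𝒜 : Type*} [MeasurableSpace 𝒜] (γ : ℝ)
    (P : St d × 𝒜 → Measure (St d)) (π : St d → 𝒜) (κ : St d → Measure (St d))
    (m : St d × 𝒜 → Measure (St d)) : St d × 𝒜 → Measure (St d) :=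
  fun sa => ENNReal.ofReal (1 - γ) • Pt P κ sa + ENNReal.ofReal γ • Ppi P π m sa

/-- `Γ` is a coupling of `μ` and `ν`: a measure on the product whose marginals are `μ`, `ν`. -/
def IsCoupling {d : ℕ} (Γ : Measure (St d × St d)) (μ ν : Measure (St d)) : Prop :=
  Γ.map Prod.fst = μ ∧ Γ.map Prod.snd = ν

/-- The `1`-Wasserstein distance for the Euclidean distance on `ℝ^d`. -/
def W1 {d : ℕ} (μ ν : Measure (St d)) : ℝ≥0∞ :=
  ⨅ (Γ : Measure (St d × St d)) (_ : IsProbabilityMeasure Γ) (_ : IsCoupling Γ μ ν),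
    ∫⁻ p, edist p.1 p.2 ∂Γ

/-!
Couple `B_t^π p (·|s,a)` and `B_t^π q (·|s,a)` synchronously: the common term `(1-γ) P_t` with
itself along the diagonal (cost `0`), the discounted term through an `ε`-optimal coupling of `p`
and `q` at the next state-action pair `(s', π s')`. Hence at fixed points
`D := sup W₁(p, q)` satisfies `D ≤ γ (D + ε)` for all `ε > 0`, so the finite `D` vanishes.
Finally `W₁(μ, ν) = 0` forces `μ = ν`: by Markov, a coupling of cost `≤ εδ` gives
`μ F ≤ ν (F^δ) + ε`, so `μ F ≤ ν F` on closed sets, and closed sets determine finite measures.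
-/

namespace MeasureTheory.Measure

variable {α β γ : Type*} [MeasurableSpace α] [MeasurableSpace β] [MeasurableSpace γ]

theorem map_bind {m : Measure α} {g : α → Measure β} (hg : Measurable g) {f : β → γ}
    (hf : Measurable f) : (m.bind g).map f = m.bind fun a => (g a).map f := by
  rw [Measure.bind, ← join_map_map hf, Measure.map_map (measurable_map f hf) hg]
  rfl

end MeasureTheory.Measure

theorem ENNReal.eq_zero_of_forall_le_mul_add {a c : ℝ≥0∞} (hc : c < 1) (ha : a ≠ ⊤)
    (h : ∀ ε : ℝ≥0∞, 0 < ε → a ≤ c * (a + ε)) : a = 0 := by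
  have hle : a ≤ c * a := ENNReal.le_of_forall_pos_le_add fun ε hε _ =>
    calc a ≤ c * (a + ε) := h ε (by exact_mod_cast hε)
      _ = c * a + c * ε := mul_add _ _ _
      _ ≤ c * a + ε := by gcongr; exact mul_le_of_le_one_left' hc.le
  by_contra ha0
  exact (ENNReal.mul_lt_mul_right ha0 ha hc).not_ge (by rwa [mul_one, mul_comm])

section CouplingCost

variable {X : Type*} [PseudoEMetricSpace X] [MeasurableSpace X] [OpensMeasurableSpace X]
  [SecondCountableTopology X] {μ ν : Measure X}

theorem measure_le_measure_thickening_add_lintegral_edist_div {Γ : Measure (X × X)}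
    (h₁ : Γ.map Prod.fst = μ) (h₂ : Γ.map Prod.snd = ν) {F : Set X} (hF : MeasurableSet F)
    {δ : ℝ} (hδ : 0 < δ) :
    μ F ≤ ν (Metric.thickening δ F) + (∫⁻ p, edist p.1 p.2 ∂Γ) / ENNReal.ofReal δ := by
  have hfar : Prod.fst ⁻¹' F ⊆
      Prod.snd ⁻¹' Metric.thickening δ F ∪ {p : X × X | ENNReal.ofReal δ ≤ edist p.1 p.2} := by
    rintro ⟨x, y⟩ hx
    by_cases hxy : edist x y < ENNReal.ofReal δ
    · refine Or.inl ((Metric.mem_thickening_iff_exists_edist_lt _ _).mpr ⟨x, hx, ?_⟩)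
      rwa [edist_comm]
    · exact Or.inr (not_lt.mp hxy)
  calc μ F = Γ (Prod.fst ⁻¹' F) := by rw [← h₁, Measure.map_apply measurable_fst hF]
    _ ≤ Γ (Prod.snd ⁻¹' Metric.thickening δ F)
        + Γ {p : X × X | ENNReal.ofReal δ ≤ edist p.1 p.2} :=
      (measure_mono hfar).trans (measure_union_le _ _)
    _ ≤ ν (Metric.thickening δ F) + (∫⁻ p, edist p.1 p.2 ∂Γ) / ENNReal.ofReal δ := by
      rw [← h₂, Measure.map_apply measurable_snd Metric.isOpen_thickening.measurableSet]
      gcongr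
      exact meas_ge_le_lintegral_div measurable_edist.aemeasurable (by simpa using hδ)
        ENNReal.ofReal_ne_top

variable (μ ν) in
def CouplingCostInfZero : Prop :=
  ∀ ε : ℝ≥0∞, 0 < ε → ∃ Γ : Measure (X × X),
    Γ.map Prod.fst = μ ∧ Γ.map Prod.snd = ν ∧ ∫⁻ p, edist p.1 p.2 ∂Γ ≤ ε

theorem CouplingCostInfZero.symm (h : CouplingCostInfZero μ ν) : CouplingCostInfZero ν μ := by
  intro ε hε
  obtain ⟨Γ, h₁, h₂, hcost⟩ := h ε hε
  refine ⟨Γ.map Prod.swap, ?_, ?_, ?_⟩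
  · rwa [Measure.map_map measurable_fst measurable_swap]
  · rwa [Measure.map_map measurable_snd measurable_swap]
  · simpa only [lintegral_map measurable_edist measurable_swap, Function.comp_apply,
      Prod.fst_swap, Prod.snd_swap, edist_comm] using hcost

theorem CouplingCostInfZero.measure_le [IsFiniteMeasure ν] (h : CouplingCostInfZero μ ν)
    {F : Set X} (hF : IsClosed F) : μ F ≤ ν F := by
  have hthick : ∀ δ : ℝ, 0 < δ → μ F ≤ ν (Metric.thickening δ F) := fun δ hδ =>
    ENNReal.le_of_forall_pos_le_add fun ε hε _ => by
      obtain ⟨Γ, h₁, h₂, hcost⟩ := h (ENNReal.ofReal δ * ε) (by positivity)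
      refine (measure_le_measure_thickening_add_lintegral_edist_div h₁ h₂ hF.measurableSet
        hδ).trans ?_
      gcongr
      rw [ENNReal.div_le_iff (by simpa using hδ) ENNReal.ofReal_ne_top, mul_comm]
      exact hcost
  exact ge_of_tendsto
    (tendsto_measure_thickening_of_isClosed ⟨1, one_pos, measure_ne_top ν _⟩ hF)
    (eventually_nhdsWithin_of_forall hthick)

theorem CouplingCostInfZero.eq [BorelSpace X] [IsFiniteMeasure μ] [IsFiniteMeasure ν]
    (h : CouplingCostInfZero μ ν) : μ = ν :=
  ext_of_generate_finite {s | IsClosed s} (borel_eq_generateFrom_isClosed.subst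
    BorelSpace.measurable_eq) isPiSystem_isClosed
    (fun _ hs => le_antisymm (h.measure_le hs) (h.symm.measure_le hs))
    (le_antisymm (h.measure_le isClosed_univ) (h.symm.measure_le isClosed_univ))

end CouplingCost

section Wasserstein

variable {d : ℕ} {μ ν : Measure (St d)} {Γ : Measure (St d × St d)}

theorem IsCoupling.isProbabilityMeasure_left (h : IsCoupling Γ μ ν) [IsProbabilityMeasure Γ] :
    IsProbabilityMeasure μ :=
  h.1 ▸ Measure.isProbabilityMeasure_map measurable_fst.aemeasurable

theorem IsCoupling.isProbabilityMeasure_right (h : IsCoupling Γ μ ν) [IsProbabilityMeasure Γ] :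
    IsProbabilityMeasure ν :=
  h.2 ▸ Measure.isProbabilityMeasure_map measurable_snd.aemeasurable

theorem IsCoupling.isProbabilityMeasure (h : IsCoupling Γ μ ν) [IsProbabilityMeasure μ] :
    IsProbabilityMeasure Γ :=
  have : IsProbabilityMeasure (Γ.map Prod.fst) := h.1 ▸ ‹_›
  Measure.isProbabilityMeasure_of_map Prod.fst

theorem W1_le_lintegral_edist [IsProbabilityMeasure Γ] (h : IsCoupling Γ μ ν) :
    W1 μ ν ≤ ∫⁻ p, edist p.1 p.2 ∂Γ :=
  iInf₂_le_of_le Γ ‹_› (iInf_le _ h)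

theorem exists_isCoupling_lintegral_edist_lt {r : ℝ≥0∞} (h : W1 μ ν < r) :
    ∃ Γ : Measure (St d × St d), IsProbabilityMeasure Γ ∧ IsCoupling Γ μ ν ∧
      ∫⁻ p, edist p.1 p.2 ∂Γ < r := by
  simpa only [W1, iInf_lt_iff, exists_prop] using h

theorem eq_of_W1_eq_zero (h : W1 μ ν = 0) : μ = ν := by
  have hsmall : CouplingCostInfZero μ ν := fun ε hε => by
    obtain ⟨Γ, -, hcpl, hcost⟩ := exists_isCoupling_lintegral_edist_lt (h ▸ hε)
    exact ⟨Γ, hcpl.1, hcpl.2, hcost.le⟩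
  obtain ⟨Γ, hΓ, hcpl, -⟩ := exists_isCoupling_lintegral_edist_lt (h ▸ one_pos)
  have := hcpl.isProbabilityMeasure_left
  have := hcpl.isProbabilityMeasure_right
  exact hsmall.eq

end Wasserstein

section BellmanContraction

variable {d : ℕ} {𝒜 : Type*} [MeasurableSpace 𝒜] (γ : ℝ) (P : St d × 𝒜 → Measure (St d))
  (π : St d → 𝒜) (κ : St d → Measure (St d)) (Γ : St d × 𝒜 → Measure (St d × St d))

def bpathCoupling : St d × 𝒜 → Measure (St d × St d) :=
  fun sa => ENNReal.ofReal (1 - γ) • (Pt P κ sa).map Function.diag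
    + ENNReal.ofReal γ • (P sa).bind fun s' => Γ (s', π s')

variable {γ P π κ Γ}

theorem map_bpathCoupling (hπ : Measurable π) (hΓ : Measurable Γ) {f : St d × St d → St d}
    (hf : Measurable f) (hf_diag : ∀ x, f (x, x) = x) (sa : St d × 𝒜) :
    (bpathCoupling γ P π κ Γ sa).map f = ENNReal.ofReal (1 - γ) • Pt P κ sa
      + ENNReal.ofReal γ • (P sa).bind fun s' => (Γ (s', π s')).map f := by
  have hdiag : f ∘ Function.diag = id := funext hf_diag
  rw [bpathCoupling, Measure.map_add _ _ hf, Measure.map_smul, Measure.map_smul,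
    Measure.map_map hf measurable_diag, hdiag, Measure.map_id,
    Measure.map_bind (by fun_prop : Measurable fun s' => Γ (s', π s')) hf]

theorem isCoupling_bpathCoupling (hπ : Measurable π) (hΓ : Measurable Γ)
    {p q : St d × 𝒜 → Measure (St d)} (hcpl : ∀ sa, IsCoupling (Γ sa) (p sa) (q sa))
    (sa : St d × 𝒜) :
    IsCoupling (bpathCoupling γ P π κ Γ sa) (Bpath γ P π κ p sa) (Bpath γ P π κ q sa) := by
  constructor
  · rw [map_bpathCoupling hπ hΓ measurable_fst (fun _ => rfl)]
    simp only [fun s' => (hcpl (s', π s')).1]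
    rfl
  · rw [map_bpathCoupling hπ hΓ measurable_snd (fun _ => rfl)]
    simp only [fun s' => (hcpl (s', π s')).2]
    rfl

theorem lintegral_edist_bpathCoupling (hπ : Measurable π) (hΓ : Measurable Γ)
    (sa : St d × 𝒜) :
    ∫⁻ p, edist p.1 p.2 ∂bpathCoupling γ P π κ Γ sa
      = ENNReal.ofReal γ * ∫⁻ s', ∫⁻ p, edist p.1 p.2 ∂Γ (s', π s') ∂P sa := by
  rw [bpathCoupling, lintegral_add_measure, lintegral_smul_measure, lintegral_smul_measure,
    lintegral_map measurable_edist measurable_diag,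
    Measure.lintegral_bind (by fun_prop : Measurable fun s' => Γ (s', π s')).aemeasurable
      measurable_edist.aemeasurable]
  simp

theorem W1_bpath_le_mul_iSup (hπ : Measurable π) (hΓ : Measurable Γ)
    {p q : St d × 𝒜 → Measure (St d)} (hcpl : ∀ sa, IsCoupling (Γ sa) (p sa) (q sa))
    (sa : St d × 𝒜) [IsProbabilityMeasure (P sa)]
    [IsProbabilityMeasure (Bpath γ P π κ p sa)] :
    W1 (Bpath γ P π κ p sa) (Bpath γ P π κ q sa)
      ≤ ENNReal.ofReal γ * ⨆ sa', ∫⁻ p, edist p.1 p.2 ∂Γ sa' := by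
  have hcpl' := isCoupling_bpathCoupling (γ := γ) (P := P) (κ := κ) hπ hΓ hcpl sa
  have := hcpl'.isProbabilityMeasure
  calc W1 (Bpath γ P π κ p sa) (Bpath γ P π κ q sa)
      ≤ ∫⁻ p, edist p.1 p.2 ∂bpathCoupling γ P π κ Γ sa := W1_le_lintegral_edist hcpl'
    _ = ENNReal.ofReal γ * ∫⁻ s', ∫⁻ p, edist p.1 p.2 ∂Γ (s', π s') ∂P sa :=
      lintegral_edist_bpathCoupling hπ hΓ sa
    _ ≤ ENNReal.ofReal γ * ⨆ sa', ∫⁻ p, edist p.1 p.2 ∂Γ sa' := by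
      gcongr
      exact lintegral_le_const <| .of_forall fun s' =>
        le_iSup (fun sa' => ∫⁻ p, edist p.1 p.2 ∂Γ sa') _

end BellmanContraction

theorem bellman_path_fixed_point_unique_general {d : ℕ} {𝒜 : Type*} [MeasurableSpace 𝒜]
    (γ : ℝ) (hγ1 : γ < 1)
    (P : St d × 𝒜 → Measure (St d))
    (hPprob : ∀ sa, IsProbabilityMeasure (P sa))
    (π : St d → 𝒜) (hπ : Measurable π)
    (κ : St d → Measure (St d))
    (p q : St d × 𝒜 → Measure (St d))
    -- both are fixed points of B_t^π
    (hpfix : ∀ sa, Bpath γ P π κ p sa = p sa)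
    (hqfix : ∀ sa, Bpath γ P π κ q sa = q sa)
    -- finite supremum Wasserstein distance
    (hfin : (⨆ sa : St d × 𝒜, W1 (p sa) (q sa)) < ⊤)
    -- jointly measurable families of ε-optimal couplings
    (hcpl : ∀ ε : ℝ≥0∞, 0 < ε → ∃ Γ : St d × 𝒜 → Measure (St d × St d),
      Measurable Γ ∧ (∀ sa, IsProbabilityMeasure (Γ sa)) ∧
      (∀ sa, IsCoupling (Γ sa) (p sa) (q sa)) ∧
      ∀ sa, (∫⁻ pr, edist pr.1 pr.2 ∂Γ sa) ≤ W1 (p sa) (q sa) + ε) :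
    ∀ sa : St d × 𝒜, p sa = q sa := by
  have hpprob : ∀ sa, IsProbabilityMeasure (p sa) := by
    obtain ⟨Γ, -, hΓprob, hΓcpl, -⟩ := hcpl 1 one_pos
    exact fun sa => (hΓcpl sa).isProbabilityMeasure_left
  have hcontr : ∀ ε : ℝ≥0∞, 0 < ε →
      ⨆ sa, W1 (p sa) (q sa) ≤ ENNReal.ofReal γ * ((⨆ sa, W1 (p sa) (q sa)) + ε) := by
    intro ε hε
    obtain ⟨Γ, hΓ, -, hΓcpl, hΓcost⟩ := hcpl ε hε
    refine iSup_le fun sa => ?_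
    have : IsProbabilityMeasure (Bpath γ P π κ p sa) := hpfix sa ▸ hpprob sa
    calc W1 (p sa) (q sa) = W1 (Bpath γ P π κ p sa) (Bpath γ P π κ q sa) := by
          rw [hpfix, hqfix]
      _ ≤ ENNReal.ofReal γ * ⨆ sa', ∫⁻ pr, edist pr.1 pr.2 ∂Γ sa' :=
          W1_bpath_le_mul_iSup hπ hΓ hΓcpl sa
      _ ≤ ENNReal.ofReal γ * ((⨆ sa, W1 (p sa) (q sa)) + ε) := by
          gcongr
          refine iSup_le fun sa' => (hΓcost sa').trans ?_
          gcongr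
          exact le_iSup (fun sa => W1 (p sa) (q sa)) sa'
  have hW1 : ⨆ sa, W1 (p sa) (q sa) = 0 :=
    ENNReal.eq_zero_of_forall_le_mul_add (ENNReal.ofReal_lt_one.mpr hγ1) hfin.ne hcontr
  exact fun sa => eq_of_W1_eq_zero <| nonpos_iff_eq_zero.mp <|
    (le_iSup (fun sa => W1 (p sa) (q sa)) sa).trans_eq hW1

/-- The fixed point of the probability-path Bellman operator `B_t^π` is
unique among measurable families with finite first moments admitting jointly measurable
near-optimal couplings. -/
theorem bellman_path_fixed_point_unique {d : ℕ} {𝒜 : Type*} [MeasurableSpace 𝒜]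
    (t : ℝ) (ht : t ∈ Set.Icc (0 : ℝ) 1)
    (γ : ℝ) (hγ0 : 0 ≤ γ) (hγ1 : γ < 1)
    (P : St d × 𝒜 → Measure (St d)) (hPmeas : Measurable P)
    (hPprob : ∀ sa, IsProbabilityMeasure (P sa))
    (π : St d → 𝒜) (hπ : Measurable π)
    (κ : St d → Measure (St d)) (hκmeas : Measurable κ)
    (hκprob : ∀ x, IsProbabilityMeasure (κ x))
    (p q : St d × 𝒜 → Measure (St d))
    (hpmeas : Measurable p) (hqmeas : Measurable q)
    (hpprob : ∀ sa, IsProbabilityMeasure (p sa)) (hqprob : ∀ sa, IsProbabilityMeasure (q sa))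
    -- finite first moments
    (hpmom : ∀ sa, (∫⁻ x, (‖x‖₊ : ℝ≥0∞) ∂p sa) < ⊤)
    (hqmom : ∀ sa, (∫⁻ x, (‖x‖₊ : ℝ≥0∞) ∂q sa) < ⊤)
    -- both are fixed points of B_t^π
    (hpfix : ∀ sa, Bpath γ P π κ p sa = p sa)
    (hqfix : ∀ sa, Bpath γ P π κ q sa = q sa)
    -- finite supremum Wasserstein distance
    (hfin : (⨆ sa : St d × 𝒜, W1 (p sa) (q sa)) < ⊤)
    -- jointly measurable families of ε-optimal couplings
    (hcpl : ∀ ε : ℝ≥0∞, 0 < ε → ∃ Γ : St d × 𝒜 → Measure (St d × St d),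
      Measurable Γ ∧ (∀ sa, IsProbabilityMeasure (Γ sa)) ∧
      (∀ sa, IsCoupling (Γ sa) (p sa) (q sa)) ∧
      ∀ sa, (∫⁻ pr, edist pr.1 pr.2 ∂Γ sa) ≤ W1 (p sa) (q sa) + ε) :
    ∀ sa : St d × 𝒜, p sa = q sa :=
  bellman_path_fixed_point_unique_general γ hγ1 P hPprob π hπ κ p q hpfix hqfix hfin hcpl
end
end

section
/- Fokker–Planck equation for mixtures of diffusion processes. Let γ ∈ [0,1], let g : [0,T] → ℝ be a diffusion coefficient, and let f¹_t, f²_t : ℝ^d → ℝ^d be C¹ drift fields. Suppose p¹_t and p²_t are probability density paths on ℝ^d, jointly C¹ in t and C² in x, satisfying the Fokker–Planck equations ∂_t pⁱ_t(x) = −div_x(pⁱ_t(x) fⁱ_t(x)) + (g(t)²/2)·Δ_x pⁱ_t(x) for i = 1, 2 and all (t,x). Assume the mixture p_t := (1−γ)p¹_t + γp²_t is strictly positive. Then p_t satisfies the Fokker–Planck equation with the same diffusion coefficient g and the mixed drift f_t(x) := ((1−γ)p¹_t(x)f¹_t(x) + γp²_t(x)f²_t(x)) / ((1−γ)p¹_t(x)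 + γp²_t(x)); that is, ∂_t p_t(x) = −div_x(p_t(x) f_t(x)) + (g(t)²/2)·Δ_x p_t(x) for all (t,x). Hence the mixture of the marginal laws of two diffusion processes sharing the same diffusion coefficient is itself generated by a diffusion process with the density-weighted mixed drift. -/
open MeasureTheory
open scoped ENNReal NNReal

noncomputable section

/-- The divergence of a vector field on `ℝ^d` (trace of the Jacobian). -/
def diverg {d : ℕ} (F : EuclideanSpace ℝ (Fin d) → EuclideanSpace ℝ (Fin d))
    (x : EuclideanSpace ℝ (Fin d)) : ℝ :=
  ∑ i : Fin d, fderiv ℝ F x (EuclideanSpace.single i 1) i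

/-- The Laplacian of a scalar field on `ℝ^d` (divergence of the gradient). -/
def laplacian {d : ℕ} (f : EuclideanSpace ℝ (Fin d) → ℝ)
    (x : EuclideanSpace ℝ (Fin d)) : ℝ :=
  ∑ i : Fin d, fderiv ℝ (fun y => fderiv ℝ f y (EuclideanSpace.single i 1)) x
      (EuclideanSpace.single i 1)

/-!
The Fokker–Planck right-hand side is linear in the pair (density, flux), and the mixed drift is
chosen so that the flux `p f` of the mixture is the mixture `(1 - γ) p¹ f¹ + γ p² f²` of the
fluxes. Hence the equation for `p` is `(1 - γ)` times the equation for `p¹` plus `γ` times the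
equation for `p²`.
-/

theorem DifferentiableAt.comp_prodMk_const {𝕜 E F G : Type*} [NontriviallyNormedField 𝕜]
    [NormedAddCommGroup E] [NormedSpace 𝕜 E] [NormedAddCommGroup F] [NormedSpace 𝕜 F]
    [NormedAddCommGroup G] [NormedSpace 𝕜 G] {p : E → F → G} {t : E} {x : F}
    (h : DifferentiableAt 𝕜 (fun q : E × F => p q.1 q.2) (t, x)) :
    DifferentiableAt 𝕜 (fun τ => p τ x) t :=
  h.comp (f := fun τ => (τ, x)) t (differentiableAt_id.prodMk (differentiableAt_const x))

section

variable {d : ℕ} {x : EuclideanSpace ℝ (Fin d)}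

theorem diverg_add {F G : EuclideanSpace ℝ (Fin d) → EuclideanSpace ℝ (Fin d)}
    (hF : DifferentiableAt ℝ F x) (hG : DifferentiableAt ℝ G x) :
    diverg (fun y => F y + G y) x = diverg F x + diverg G x := by
  simp only [diverg, fderiv_fun_add hF hG, add_apply, PiLp.add_apply,
    Finset.sum_add_distrib]

theorem diverg_const_smul (c : ℝ) (F : EuclideanSpace ℝ (Fin d) → EuclideanSpace ℝ (Fin d)) :
    diverg (fun y => c • F y) x = c * diverg F x := by
  change diverg (c • F) x = _
  simp only [diverg, fderiv_const_smul_field, Pi.smul_apply, smul_apply, PiLp.smul_apply,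
    smul_eq_mul, Finset.mul_sum]

theorem laplacian_add {u v : EuclideanSpace ℝ (Fin d) → ℝ}
    (hu : ContDiff ℝ 2 u) (hv : ContDiff ℝ 2 v) :
    laplacian (fun y => u y + v y) x = laplacian u x + laplacian v x := by
  have hud : Differentiable ℝ u := hu.differentiable two_ne_zero
  have hvd : Differentiable ℝ v := hv.differentiable two_ne_zero
  have hu' : Differentiable ℝ (fderiv ℝ u) :=
    (hu.fderiv_right (m := 1) (by norm_num)).differentiable one_ne_zero
  have hv' : Differentiable ℝ (fderiv ℝ v) :=
    (hv.fderiv_right (m := 1) (by norm_num)).differentiable one_ne_zero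
  simp only [laplacian, fun y => fderiv_fun_add (hud y) (hvd y), add_apply]
  rw [← Finset.sum_add_distrib]
  refine Finset.sum_congr rfl fun i _ => ?_
  rw [fderiv_fun_add ((hu' x).clm_apply (differentiableAt_const _))
    ((hv' x).clm_apply (differentiableAt_const _)), add_apply]

theorem laplacian_const_mul (c : ℝ) (u : EuclideanSpace ℝ (Fin d) → ℝ) :
    laplacian (fun y => c * u y) x = c * laplacian u x := by
  have hsmul (h : EuclideanSpace ℝ (Fin d) → ℝ) :
      fderiv ℝ (fun y => c * h y) = c • fderiv ℝ h :=
    fderiv_const_smul_field (f := h) c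
  simp only [laplacian, hsmul, Pi.smul_apply, smul_apply, smul_eq_mul, Finset.mul_sum]

end

theorem fokkerPlanck_mixture_general {d : ℕ} (T : ℝ)
    (γ : ℝ)
    (g : ℝ → ℝ)
    (f1 f2 : ℝ → EuclideanSpace ℝ (Fin d) → EuclideanSpace ℝ (Fin d))
    (hf1C1 : ∀ t, ContDiff ℝ 1 (f1 t)) (hf2C1 : ∀ t, ContDiff ℝ 1 (f2 t))
    (p1 p2 : ℝ → EuclideanSpace ℝ (Fin d) → ℝ)
    (hp1C1 : ContDiff ℝ 1 fun q : ℝ × EuclideanSpace ℝ (Fin d) => p1 q.1 q.2)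
    (hp2C1 : ContDiff ℝ 1 fun q : ℝ × EuclideanSpace ℝ (Fin d) => p2 q.1 q.2)
    (hp1C2 : ∀ t, ContDiff ℝ 2 (p1 t)) (hp2C2 : ∀ t, ContDiff ℝ 2 (p2 t))
    (hfp1 : ∀ t ∈ Set.Icc (0 : ℝ) T, ∀ x,
      deriv (fun τ => p1 τ x) t =
        -diverg (fun y => p1 t y • f1 t y) x + g t ^ 2 / 2 * laplacian (p1 t) x)
    (hfp2 : ∀ t ∈ Set.Icc (0 : ℝ) T, ∀ x,
      deriv (fun τ => p2 τ x) t =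
        -diverg (fun y => p2 t y • f2 t y) x + g t ^ 2 / 2 * laplacian (p2 t) x)
    (hpos : ∀ t x, 0 < (1 - γ) * p1 t x + γ * p2 t x)
    (f : ℝ → EuclideanSpace ℝ (Fin d) → EuclideanSpace ℝ (Fin d))
    (hf : ∀ t x, f t x = ((1 - γ) * p1 t x + γ * p2 t x)⁻¹ •
        (((1 - γ) * p1 t x) • f1 t x + (γ * p2 t x) • f2 t x)) :
    ∀ t ∈ Set.Icc (0 : ℝ) T, ∀ x,
      deriv (fun τ => (1 - γ) * p1 τ x + γ * p2 τ x) t =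
        -diverg (fun y => ((1 - γ) * p1 t y + γ * p2 t y) • f t y) x +
          g t ^ 2 / 2 * laplacian (fun y => (1 - γ) * p1 t y + γ * p2 t y) x := by
  intro t ht x
  have hp1t : DifferentiableAt ℝ (fun τ => p1 τ x) t :=
    (hp1C1.differentiable one_ne_zero).differentiableAt.comp_prodMk_const
  have hp2t : DifferentiableAt ℝ (fun τ => p2 τ x) t :=
    (hp2C1.differentiable one_ne_zero).differentiableAt.comp_prodMk_const
  have hflux1 : DifferentiableAt ℝ (fun y => (1 - γ) • (p1 t y • f1 t y)) x :=
    (((hp1C2 t).differentiable two_ne_zero x).fun_smul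
      ((hf1C1 t).differentiable one_ne_zero x)).fun_const_smul _
  have hflux2 : DifferentiableAt ℝ (fun y => γ • (p2 t y • f2 t y)) x :=
    (((hp2C2 t).differentiable two_ne_zero x).fun_smul
      ((hf2C1 t).differentiable one_ne_zero x)).fun_const_smul _
  have hflux : (fun y => ((1 - γ) * p1 t y + γ * p2 t y) • f t y)
      = fun y => (1 - γ) • (p1 t y • f1 t y) + γ • (p2 t y • f2 t y) := by
    funext y
    rw [hf, smul_inv_smul₀ (hpos t y).ne', mul_smul, mul_smul]
  rw [deriv_fun_add (hp1t.const_mul _) (hp2t.const_mul _), deriv_const_mul_field,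
    deriv_const_mul_field, hflux, diverg_add hflux1 hflux2,
    diverg_const_smul, diverg_const_smul,
    laplacian_add (contDiff_const.mul (hp1C2 t)) (contDiff_const.mul (hp2C2 t)),
    laplacian_const_mul, laplacian_const_mul, hfp1 t ht x, hfp2 t ht x]
  ring

/-- Fokker–Planck equation for mixtures of diffusion processes: the mixture
of the marginal laws of two diffusions sharing the same diffusion coefficient satisfies the
Fokker–Planck equation with the density-weighted mixed drift. -/
theorem fokkerPlanck_mixture {d : ℕ} (T : ℝ)
    (γ : ℝ) (hγ0 : 0 ≤ γ) (hγ1 : γ ≤ 1)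
    (g : ℝ → ℝ)
    (f1 f2 : ℝ → EuclideanSpace ℝ (Fin d) → EuclideanSpace ℝ (Fin d))
    (hf1C1 : ∀ t, ContDiff ℝ 1 (f1 t)) (hf2C1 : ∀ t, ContDiff ℝ 1 (f2 t))
    (p1 p2 : ℝ → EuclideanSpace ℝ (Fin d) → ℝ)
    (hp1C1 : ContDiff ℝ 1 fun q : ℝ × EuclideanSpace ℝ (Fin d) => p1 q.1 q.2)
    (hp2C1 : ContDiff ℝ 1 fun q : ℝ × EuclideanSpace ℝ (Fin d) => p2 q.1 q.2)
    (hp1C2 : ∀ t, ContDiff ℝ 2 (p1 t)) (hp2C2 : ∀ t, ContDiff ℝ 2 (p2 t))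
    (hp1nn : ∀ t x, 0 ≤ p1 t x) (hp2nn : ∀ t x, 0 ≤ p2 t x)
    (hp1int : ∀ t, (∫ x, p1 t x) = 1) (hp2int : ∀ t, (∫ x, p2 t x) = 1)
    (hfp1 : ∀ t ∈ Set.Icc (0 : ℝ) T, ∀ x,
      deriv (fun τ => p1 τ x) t =
        -diverg (fun y => p1 t y • f1 t y) x + g t ^ 2 / 2 * laplacian (p1 t) x)
    (hfp2 : ∀ t ∈ Set.Icc (0 : ℝ) T, ∀ x,
      deriv (fun τ => p2 τ x) t =
        -diverg (fun y => p2 t y • f2 t y) x + g t ^ 2 / 2 * laplacian (p2 t) x)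
    (hpos : ∀ t x, 0 < (1 - γ) * p1 t x + γ * p2 t x)
    (f : ℝ → EuclideanSpace ℝ (Fin d) → EuclideanSpace ℝ (Fin d))
    (hf : ∀ t x, f t x = ((1 - γ) * p1 t x + γ * p2 t x)⁻¹ •
        (((1 - γ) * p1 t x) • f1 t x + (γ * p2 t x) • f2 t x)) :
    ∀ t ∈ Set.Icc (0 : ℝ) T, ∀ x,
      deriv (fun τ => (1 - γ) * p1 τ x + γ * p2 τ x) t =
        -diverg (fun y => ((1 - γ) * p1 t y + γ * p2 t y) • f t y) x +
          g t ^ 2 / 2 * laplacian (fun y => (1 - γ) * p1 t y + γ * p2 t y) x :=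
  fokkerPlanck_mixture_general T γ g f1 f2 hf1C1 hf2C1 p1 p2 hp1C1 hp2C1 hp1C2 hp2C2 hfp1 hfp2 hpos
    f hf
end
end
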